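/- Let 𝔫 be the 5-dimensional real Lie algebra with orthonormal basis {E₁,…,E₅} and non-zero brackets [E₁,E₂] = m·E₄ and [E₁,E₃] = s·E₅, where m ≥ s > 0 (the two-step nilpotent Lie algebra with two-dimensional center). Then there exist c ∈ ℝ and a derivation D of 𝔫 with Ric = c·Id + D if and only if s = m; moreover, in that case necessarily c = −2m². -/

import Mathlib

open scoped BigOperators

namespace Nilsoliton2

noncomputable section

abbrev V : Type := Fin 5 → ℝ

/-- The orthonormal basis vectors E₁,…,E₅ (indexed 0,…,4). -/
def E (i : Fin 5) : V := Pi.single i 1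

/-- The inner product making `E` an orthonormal basis. -/
def ip (x y : V) : ℝ := ∑ i, x i * y i

/-- `D` is a derivation of the bracket `br`. -/
def IsDerivation (br : V → V → V) (D : V →ₗ[ℝ] V) : Prop :=
  ∀ X Y : V, D (br X Y) = br (D X) Y + br X (D Y)

/-- `Ric` is the Ricci operator of the nilpotent Lie group with left-invariant
metric determined by the bracket `br` and the orthonormal basis `E`. -/
def IsRicci (br : V → V → V) (Ric : V →ₗ[ℝ] V) : Prop :=
  ∀ X Y : V, ip (Ric X) Y =
      -(1/2) * (∑ i : Fin 5, ip (br X (E i)) (br Y (E i)))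
      + (1/4) * (∑ i : Fin 5, ∑ j : Fin 5, ip (br (E i) (E j)) X * ip (br (E i) (E j)) Y)

/-- The bracket: [E₁,E₂] = m·E₄, [E₁,E₃] = s·E₅. -/
def br (m s : ℝ) (X Y : V) : V :=
  (m * (X 0 * Y 1 - X 1 * Y 0)) • E 3 + (s * (X 0 * Y 2 - X 2 * Y 0)) • E 4

/-! The Ricci operator is diagonal in the basis `E`, so `D = Ric - c • id` is diagonal as well.
A diagonal map is a derivation of `br m s` exactly when its eigenvalue on `E₄` is the sum of
those on `E₁` and `E₂`, and its eigenvalue on `E₅` the sum of those on `E₁` and `E₃`.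
For `Ric - c • id` these read `2c = -(3m² + s²)` and `2c = -(m² + 3s²)`, which are compatible
iff `m² = s²`, and then `c = -2m²`. -/

lemma ip_E (x : V) (j : Fin 5) : ip x (E j) = x j := by
  simp [ip, E, Pi.single_apply, mul_ite]

def ricciDiag (m s : ℝ) : Fin 5 → ℝ :=
  ![-(m ^ 2 + s ^ 2) / 2, -(m ^ 2 / 2), -(s ^ 2 / 2), m ^ 2 / 2, s ^ 2 / 2]

lemma IsRicci.eq_diagonal {m s : ℝ} {Ric : V →ₗ[ℝ] V} (hRic : IsRicci (br m s) Ric) :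
    Ric = Matrix.toLin' (Matrix.diagonal (ricciDiag m s)) := by
  refine LinearMap.ext fun X => funext fun b => ?_
  rw [Matrix.toLin'_apply, Matrix.mulVec_diagonal, ← ip_E (Ric X) b, hRic X (E b)]
  fin_cases b <;> simp [ip, br, E, ricciDiag, Fin.sum_univ_five, Pi.single_apply] <;> ring

lemma isDerivation_diagonal_iff {m s : ℝ} (hm : m ≠ 0) (hs : s ≠ 0) (d : Fin 5 → ℝ) :
    IsDerivation (br m s) (Matrix.toLin' (Matrix.diagonal d)) ↔
      d 3 = d 0 + d 1 ∧ d 4 = d 0 + d 2 := by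
  constructor
  · intro hD
    have h₁ := congrFun (hD (E 0) (E 1)) 3
    have h₂ := congrFun (hD (E 0) (E 2)) 4
    simp [br, E, Matrix.mulVec_diagonal] at h₁ h₂
    exact ⟨mul_left_cancel₀ hm (by linear_combination h₁),
      mul_left_cancel₀ hs (by linear_combination h₂)⟩
  · rintro ⟨h₁, h₂⟩ X Y
    ext b
    fin_cases b <;> simp [br, E, Matrix.mulVec_diagonal, h₁, h₂] <;> ring

lemma IsRicci.isDerivation_sub_smul_id_iff {m s : ℝ} (hm : m ≠ 0) (hs : s ≠ 0)
    {Ric : V →ₗ[ℝ] V} (hRic : IsRicci (br m s) Ric) (c : ℝ) :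
    IsDerivation (br m s) (Ric - c • LinearMap.id) ↔
      2 * c = -(3 * m ^ 2 + s ^ 2) ∧ 2 * c = -(m ^ 2 + 3 * s ^ 2) := by
  have hdiag : Ric - c • LinearMap.id =
      Matrix.toLin' (Matrix.diagonal (ricciDiag m s - Function.const _ c)) := by
    rw [hRic.eq_diagonal]
    refine LinearMap.ext fun X => funext fun b => ?_
    simp [Matrix.mulVec_diagonal, sub_mul]
  rw [hdiag, isDerivation_diagonal_iff hm hs]
  simp only [ricciDiag, Pi.sub_apply, Function.const_apply, Matrix.cons_val, Matrix.cons_val_zero,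
    Matrix.cons_val_one]
  constructor <;> rintro ⟨h₁, h₂⟩ <;> constructor <;> linarith

theorem stmt2 (m s : ℝ) (hms : m ≥ s) (hs : 0 < s)
    (Ric : V →ₗ[ℝ] V) (hRic : IsRicci (br m s) Ric) :
    ((∃ (c : ℝ) (D : V →ₗ[ℝ] V), IsDerivation (br m s) D ∧
        Ric = c • (LinearMap.id : V →ₗ[ℝ] V) + D) ↔ (s = m)) ∧
    (∀ (c : ℝ) (D : V →ₗ[ℝ] V), IsDerivation (br m s) D →
        Ric = c • (LinearMap.id : V →ₗ[ℝ] V) + D → c = -2 * m ^ 2) := by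
  have hm : 0 < m := hs.trans_le hms
  have key : ∀ (c : ℝ) (D : V →ₗ[ℝ] V), Ric = c • LinearMap.id + D →
      (IsDerivation (br m s) D ↔ 2 * c = -(3 * m ^ 2 + s ^ 2) ∧ 2 * c = -(m ^ 2 + 3 * s ^ 2)) := by
    rintro c D rfl
    simpa using hRic.isDerivation_sub_smul_id_iff hm.ne' hs.ne' c
  refine ⟨⟨?_, ?_⟩, ?_⟩
  · rintro ⟨c, D, hD, hEq⟩
    obtain ⟨h₁, h₂⟩ := (key c D hEq).1 hD
    exact (sq_eq_sq₀ hs.le hm.le).1 (by linarith)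
  · rintro rfl
    refine ⟨-2 * s ^ 2, Ric - (-2 * s ^ 2) • LinearMap.id, ?_, by abel⟩
    exact (key _ _ (by abel)).2 ⟨by ring, by ring⟩
  · intro c D hD hEq
    obtain ⟨h₁, h₂⟩ := (key c D hEq).1 hD
    linarith

end

end Nilsoliton2
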